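/- arXiv:1705.00758 — 2 statements merged into one kernel-verified Lean document; each statement's English description precedes it below -/
import Mathlib

section
/- In a simply-laced root system, a positive root β satisfies ℓ(s_β) = ⟨2ρ, β^∨⟩ − 1 (i.e. every positive root is a quantum root). -/
/- A combinatorial framework for reduced crystallographic root systems with a
chosen system of simple roots, realized inside a real inner product space.
Weyl group elements are represented as plain functions `V → V` that are
compositions of simple reflections; `len` is the Coxeter length. -/

noncomputable section
open Classical
open scoped RealInnerProductSpace

namespace Pp

variable {V : Type*} [NormedAddCommGroup V] [InnerProductSpace ℝ V]

/-- The coroot pairing `⟨x, α^∨⟩ = 2⟨x,α⟩/⟨α,α⟩`. -/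
def cpr (x α : V) : ℝ := 2 * ⟪x, α⟫ / ⟪α, α⟫

/-- The reflection `s_α`, as a plain function. -/
def sref (α : V) : V → V := fun x => x - cpr x α • α

/-- `w` is a product of `n` reflections in simple roots taken from `Δ`. -/
def IsWord (Δ : Finset V) (w : V → V) (n : ℕ) : Prop :=
  ∃ l : List V, l.length = n ∧ (∀ α ∈ l, α ∈ Δ) ∧ w = (l.map sref).foldr (· ∘ ·) id

/-- The Weyl group generated by the simple reflections, as a set of functions. -/
def Weyl (Δ : Finset V) : Set (V → V) := { w | ∃ n, IsWord Δ w n }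

/-- Coxeter length with respect to the simple system `Δ`. -/
def len (Δ : Finset V) (w : V → V) : ℕ := sInf { n | IsWord Δ w n }

/-- The positive roots: roots which are nonnegative combinations of the
simple roots in `Δ`.  For a sub-system `Δ' ⊆ Δ`, `Pos Φ Δ'` is the set of
positive roots supported on `Δ'`. -/
def Pos (Φ Δ : Finset V) : Finset V :=
  Φ.filter fun β => ∃ c : V → ℝ, (∀ α ∈ Δ, 0 ≤ c α) ∧ β = ∑ α ∈ Δ, c α • α

/-- Half sum of positive roots. -/
def rho (Φ Δ : Finset V) : V := (2:ℝ)⁻¹ • ∑ β ∈ Pos Φ Δ, β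

/-- The axioms of a reduced crystallographic root system `Φ` with simple
system `Δ`. -/
structure IsRS (Φ Δ : Finset V) : Prop where
  zero_not_mem : (0:V) ∉ Φ
  neg_mem : ∀ α ∈ Φ, -α ∈ Φ
  reduced : ∀ α ∈ Φ, ∀ t : ℝ, t • α ∈ (Φ : Set V) → t = 1 ∨ t = -1
  cryst : ∀ α ∈ Φ, ∀ β ∈ Φ, ∃ k : ℤ, (k : ℝ) = cpr α β
  refl_mem : ∀ α ∈ Φ, ∀ β ∈ Φ, sref α β ∈ Φ
  simple_mem : ∀ α ∈ Δ, α ∈ Φ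
  simple_indep : LinearIndependent ℝ (fun α : Δ => (α : V))
  pos_or_neg : ∀ β ∈ Φ, β ∈ Pos Φ Δ ∨ -β ∈ Pos Φ Δ

/-- `β` is a quantum root: `ℓ(s_β) = ⟨2ρ, β^∨⟩ - 1`. -/
def IsQuantum (Φ Δ : Finset V) (β : V) : Prop :=
  (len Δ (sref β) : ℝ) = cpr ((2:ℝ) • rho Φ Δ) β - 1

/-- Minimal length coset representatives `W^P`: elements of `W` mapping the
positive roots of the parabolic (`Pos Φ ΔP`) to positive roots. -/
def MinRep (Φ Δ ΔP : Finset V) (w : V → V) : Prop :=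
  w ∈ Weyl Δ ∧ ∀ β ∈ Pos Φ ΔP, w β ∈ Pos Φ Δ

/-- `θ` is the highest root. -/
def IsHighest (Φ Δ : Finset V) (θ : V) : Prop :=
  θ ∈ Pos Φ Δ ∧ ∀ β ∈ Φ, ∃ c : V → ℝ, (∀ α ∈ Δ, 0 ≤ c α) ∧ θ - β = ∑ α ∈ Δ, c α • α

/-- All roots have the same length. -/
def SimplyLaced (Φ : Finset V) : Prop := ∀ α ∈ Φ, ∀ β ∈ Φ, ⟪α, α⟫ = ⟪β, β⟫

/-- The node `ι ∈ Δ` is minuscule: the coefficient of `α_ι^∨` in every coroot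
is at most `1`. -/
def Minuscule (Φ Δ : Finset V) (ι : V) : Prop :=
  ∀ β ∈ Φ, ∀ c : V → ℝ,
    (2 / ⟪β, β⟫) • β = ∑ α ∈ Δ, c α • ((2 / ⟪α, α⟫) • α) → c ι ≤ 1

/-- The node `ι ∈ Δ` is cominuscule: the coefficient of `α_ι` in every
positive root is at most `1`. -/
def Cominuscule (Φ Δ : Finset V) (ι : V) : Prop :=
  ∀ β ∈ Pos Φ Δ, ∀ c : V → ℝ,
    ((∀ α ∈ Δ, 0 ≤ c α) ∧ β = ∑ α ∈ Δ, c α • α) → c ι ≤ 1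

/-- `(Φ, Δ)` is the root system of type `B_n` in the standard coordinates
given by the orthonormal family `e`. -/
def TypeBData (Φ Δ : Finset V) (n : ℕ) (e : Fin n → V) : Prop :=
  Orthonormal ℝ e ∧
  (Φ : Set V) =
    ({v | ∃ i j : Fin n, i ≠ j ∧ (v = e i - e j ∨ v = e i + e j ∨ v = -(e i + e j))} ∪
     {v | ∃ i : Fin n, v = e i ∨ v = -(e i)}) ∧
  (Δ : Set V) =
    ({v | ∃ i : Fin n, ∃ h : (i : ℕ) + 1 < n, v = e i - e ⟨(i : ℕ) + 1, h⟩} ∪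
     {v | ∃ h : 0 < n, v = e ⟨n - 1, by omega⟩})

/-- `(Φ, Δ)` is the root system of type `C_n` in the standard coordinates
given by the orthonormal family `e`. -/
def TypeCData (Φ Δ : Finset V) (n : ℕ) (e : Fin n → V) : Prop :=
  Orthonormal ℝ e ∧
  (Φ : Set V) =
    ({v | ∃ i j : Fin n, i ≠ j ∧ (v = e i - e j ∨ v = e i + e j ∨ v = -(e i + e j))} ∪
     {v | ∃ i : Fin n, v = (2:ℝ) • e i ∨ v = -((2:ℝ) • e i)}) ∧
  (Δ : Set V) =
    ({v | ∃ i : Fin n, ∃ h : (i : ℕ) + 1 < n, v = e i - e ⟨(i : ℕ) + 1, h⟩} ∪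
     {v | ∃ h : 0 < n, v = (2:ℝ) • e ⟨n - 1, by omega⟩})

/-- `γ` is the distinguished (quantum) root attached to the minuscule node
`ι`: `γ = α_ι` in the simply-laced case, `γ = α_{n-1} + 2α_n = e_{n-1} + e_n`
in type `B_n` (with `ι = n`), and `γ = θ = 2e_1` in type `C_n` (with `ι = 1`). -/
def DistinguishedGamma (Φ Δ : Finset V) (ι γ : V) : Prop :=
  (SimplyLaced Φ ∧ γ = ι) ∨
  (∃ n : ℕ, ∃ _h : 2 ≤ n, ∃ e : Fin n → V, TypeBData Φ Δ n e ∧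
    ι = e ⟨n - 1, by omega⟩ ∧ γ = e ⟨n - 2, by omega⟩ + e ⟨n - 1, by omega⟩) ∨
  (∃ n : ℕ, ∃ _h : 2 ≤ n, ∃ e : Fin n → V, TypeCData Φ Δ n e ∧
    ι = e ⟨0, by omega⟩ - e ⟨1, by omega⟩ ∧ γ = (2:ℝ) • e ⟨0, by omega⟩)

end Pp

/-!
The Coxeter length of `w ∈ W` is the number of positive roots that `w` makes negative (exchange
condition), and `s_β ∈ W` since `β` is `W`-conjugate to a simple root; so `ℓ(s_β) = |N(s_β)|`.
Write `⟨2ρ, β^∨⟩ = ∑_{γ > 0} ⟨γ, β^∨⟩`. The positive roots `γ` with `s_β γ > 0` are permuted by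
`s_β`, which negates `⟨γ, β^∨⟩`, so they contribute `0`. In `N(s_β)` the root `β` contributes `2`,
and any other `γ` has `⟨γ, β^∨⟩ > 0` (else `s_β γ = γ - ⟨γ, β^∨⟩ β > 0`) and `⟨γ, β^∨⟩ < 2` by
Cauchy–Schwarz when all roots have the same length; so it contributes `1`, and
`⟨2ρ, β^∨⟩ = |N(s_β)| + 1`.
-/

namespace Pp

variable {V : Type*} [NormedAddCommGroup V] [InnerProductSpace ℝ V] {Φ Δ : Finset V}

lemma cpr_sum {ι : Type*} (s : Finset ι) (f : ι → V) (α : V) :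
    cpr (∑ i ∈ s, f i) α = ∑ i ∈ s, cpr (f i) α := by
  simp only [cpr, sum_inner, Finset.mul_sum, Finset.sum_div]

lemma cpr_self {α : V} (hα : α ≠ 0) : cpr α α = 2 := by
  have : ⟪α, α⟫ ≠ 0 := inner_self_ne_zero.mpr hα
  rw [cpr, mul_div_assoc, div_self this, mul_one]

lemma coe_reflection_orthogonal_span_singleton (α : V) :
    ⇑(ℝ ∙ α)ᗮ.reflection = sref α := by
  ext x
  rw [Submodule.reflection_orthogonal_apply, Submodule.reflection_singleton_apply, sref, cpr,
    RCLike.ofReal_real_eq_id, id, ← real_inner_self_eq_norm_sq, real_inner_comm]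
  module

lemma sref_sref (α x : V) : sref α (sref α x) = x := by
  simpa only [coe_reflection_orthogonal_span_singleton] using
    (ℝ ∙ α)ᗮ.reflection_reflection x

lemma sref_self (α : V) : sref α α = -α := by
  simpa only [coe_reflection_orthogonal_span_singleton] using
    Submodule.reflection_orthogonalComplement_singleton_eq_neg (𝕜 := ℝ) α

lemma cpr_sref_self (α x : V) : cpr (sref α x) α = -cpr x α := by
  have h := (ℝ ∙ α)ᗮ.reflection.inner_map_map x α
  rw [coe_reflection_orthogonal_span_singleton, sref_self, inner_neg_right] at h
  rw [cpr, cpr, h.symm]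
  ring

lemma sref_map (u : V ≃ₗᵢ[ℝ] V) (γ : V) : sref (u γ) = u ∘ sref γ ∘ u.symm := by
  ext x
  have hcpr : cpr x (u γ) = cpr (u.symm x) γ := by
    rw [cpr, cpr, u.inner_map_map, ← u.inner_map_map (u.symm x), u.apply_symm_apply]
  simp only [Function.comp_apply, sref, hcpr, map_sub, map_smul, u.apply_symm_apply]

lemma mem_of_mem_Pos {β : V} (hβ : β ∈ Pos Φ Δ) : β ∈ Φ := (Finset.mem_filter.mp hβ).1

lemma ne_zero_of_mem (hRS : IsRS Φ Δ) {β : V} (hβ : β ∈ Φ) : β ≠ 0 :=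
  fun h => hRS.zero_not_mem (h ▸ hβ)

lemma sum_single_smul {α : V} (hα : α ∈ Δ) (k : ℝ) :
    ∑ x ∈ Δ, (Pi.single α k : V → ℝ) x • x = k • α := by
  rw [Finset.sum_eq_single_of_mem α hα fun x _ hx => by simp [hx], Pi.single_eq_same]

lemma coeff_eq_of_sum_eq (hRS : IsRS Φ Δ) {c d : V → ℝ}
    (h : ∑ α ∈ Δ, c α • α = ∑ α ∈ Δ, d α • α) {α : V} (hα : α ∈ Δ) : c α = d α := by
  have h0 : ∑ x ∈ Δ.attach, (c x - d x) • (x : V) = 0 := by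
    rw [Finset.sum_attach Δ fun y => (c y - d y) • y]
    simp only [sub_smul, Finset.sum_sub_distrib, h, sub_self]
  have := linearIndependent_iff'.mp hRS.simple_indep Δ.attach _ h0 ⟨α, hα⟩ (Finset.mem_attach _ _)
  exact sub_eq_zero.mp this

lemma coeff_eq_zero_of_add_eq (hRS : IsRS Φ Δ) {c d e : V → ℝ} (hc : ∀ α ∈ Δ, 0 ≤ c α)
    (hd : ∀ α ∈ Δ, 0 ≤ d α)
    (h : ∑ α ∈ Δ, c α • α + ∑ α ∈ Δ, d α • α = ∑ α ∈ Δ, e α • α)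
    {α : V} (hα : α ∈ Δ) (he : e α = 0) : c α = 0 := by
  rw [← Finset.sum_add_distrib] at h
  simp only [← add_smul] at h
  have := coeff_eq_of_sum_eq hRS h hα
  linarith [hc α hα, hd α hα]

lemma neg_notMem_Pos (hRS : IsRS Φ Δ) {β : V} (hβ : β ∈ Pos Φ Δ) : -β ∉ Pos Φ Δ := by
  intro hβ'
  obtain ⟨hβΦ, c, hc, rfl⟩ := Finset.mem_filter.mp hβ
  obtain ⟨-, d, hd, hde⟩ := Finset.mem_filter.mp hβ'
  have hzero : ∀ α ∈ Δ, c α = 0 := fun α hα =>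
    coeff_eq_zero_of_add_eq hRS (e := 0) hc hd (by simp [← hde]) hα rfl
  exact ne_zero_of_mem hRS hβΦ (Finset.sum_eq_zero fun α hα => by rw [hzero α hα, zero_smul])

lemma simple_mem_Pos (hRS : IsRS Φ Δ) {α : V} (hα : α ∈ Δ) : α ∈ Pos Φ Δ :=
  Finset.mem_filter.mpr ⟨hRS.simple_mem α hα, Pi.single α 1,
    fun x _ => by by_cases hx : x = α <;> simp [hx], by rw [sum_single_smul hα, one_smul]⟩

lemma notMem_Pos_iff (hRS : IsRS Φ Δ) {β : V} (hβ : β ∈ Φ) :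
    β ∉ Pos Φ Δ ↔ -β ∈ Pos Φ Δ :=
  ⟨(hRS.pos_or_neg β hβ).resolve_left, fun h h' => neg_notMem_Pos hRS h' h⟩

lemma sref_mem_Pos_of_cpr_nonpos (hRS : IsRS Φ Δ) {β γ : V} (hβ : β ∈ Pos Φ Δ)
    (hγ : γ ∈ Pos Φ Δ) (h : cpr γ β ≤ 0) : sref β γ ∈ Pos Φ Δ := by
  obtain ⟨hβΦ, c, hc, hce⟩ := Finset.mem_filter.mp hβ
  obtain ⟨hγΦ, d, hd, hde⟩ := Finset.mem_filter.mp hγ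
  refine Finset.mem_filter.mpr ⟨hRS.refl_mem β hβΦ γ hγΦ, fun α => d α - cpr γ β * c α,
    fun α hα => by nlinarith [hc α hα, hd α hα], ?_⟩
  simp only [sref, sub_smul, mul_smul, Finset.sum_sub_distrib, ← Finset.smul_sum, ← hce, ← hde]

lemma sref_simple_mem_Pos (hRS : IsRS Φ Δ) {α γ : V} (hα : α ∈ Δ) (hγ : γ ∈ Pos Φ Δ)
    (hne : γ ≠ α) : sref α γ ∈ Pos Φ Δ := by
  have hαΦ := hRS.simple_mem α hα
  have hγΦ := mem_of_mem_Pos hγ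
  by_contra h
  obtain ⟨-, d, hd, hde⟩ :=
    Finset.mem_filter.mp ((notMem_Pos_iff hRS (hRS.refl_mem α hαΦ γ hγΦ)).mp h)
  obtain ⟨-, c, hc, hce⟩ := Finset.mem_filter.mp hγ
  have hsum : ∑ x ∈ Δ, c x • x + ∑ x ∈ Δ, d x • x =
      ∑ x ∈ Δ, (Pi.single α (cpr γ α) : V → ℝ) x • x := by
    rw [← hce, ← hde, sum_single_smul hα, sref]; abel
  have hγα : γ = c α • α := by
    rw [hce, Finset.sum_eq_single_of_mem α hα fun x hx hxα => by
      rw [coeff_eq_zero_of_add_eq hRS hc hd hsum hx (Pi.single_eq_of_ne hxα _), zero_smul]]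
  rcases hRS.reduced α hαΦ (c α) (hγα ▸ hγΦ) with h1 | h1
  · exact hne (by rw [hγα, h1, one_smul])
  · linarith [hc α hα]

lemma sref_simple_ne (hRS : IsRS Φ Δ) {α γ : V} (hα : α ∈ Δ) (hγ : γ ∈ Pos Φ Δ) :
    sref α γ ≠ α := by
  intro h
  have : γ = -α := by rw [← sref_sref α γ, h, sref_self]
  exact neg_notMem_Pos hRS (simple_mem_Pos hRS hα) (this ▸ hγ)

def word (l : List V) : V ≃ₗᵢ[ℝ] V := (l.map fun α => (ℝ ∙ α)ᗮ.reflection).prod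

lemma coe_word_cons (α : V) (l : List V) : ⇑(word (α :: l)) = sref α ∘ word l := by
  rw [word, List.map_cons, List.prod_cons, LinearIsometryEquiv.coe_mul,
    coe_reflection_orthogonal_span_singleton, word]

lemma coe_word (l : List V) : ⇑(word l) = (l.map sref).foldr (· ∘ ·) id := by
  induction l with
  | nil => rfl
  | cons α l ih => rw [coe_word_cons, ih, List.map_cons, List.foldr_cons]

lemma word_append (l₁ l₂ : List V) : word (l₁ ++ l₂) = word l₁ * word l₂ := by
  rw [word, List.map_append, List.prod_append, word, word]

lemma coe_word_concat (l : List V) (α : V) : ⇑(word (l ++ [α])) = word l ∘ sref α := by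
  rw [word_append, LinearIsometryEquiv.coe_mul, coe_word_cons]
  rfl

lemma word_inv (l : List V) : (word l)⁻¹ = word l.reverse := by
  rw [word, List.prod_inv_reverse, List.map_map, word, List.map_reverse]
  simp only [Function.comp_def, Submodule.reflection_inv]

lemma isWord_word {l : List V} (hl : ∀ σ ∈ l, σ ∈ Δ) : IsWord Δ (word l) l.length :=
  ⟨l, rfl, hl, coe_word l⟩

lemma len_word_le {l : List V} (hl : ∀ σ ∈ l, σ ∈ Δ) : len Δ (word l) ≤ l.length :=
  Nat.sInf_le (isWord_word hl)

lemma exists_word_length_eq_len {w : V → V} (hw : w ∈ Weyl Δ) :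
    ∃ l : List V, l.length = len Δ w ∧ (∀ σ ∈ l, σ ∈ Δ) ∧ w = word l := by
  obtain ⟨l, hlen, hl, rfl⟩ := Nat.sInf_mem hw
  exact ⟨l, hlen, hl, (coe_word l).symm⟩

lemma len_comp_sref_le {w : V → V} (hw : w ∈ Weyl Δ) {α : V} (hα : α ∈ Δ) :
    len Δ (w ∘ sref α) ≤ len Δ w + 1 := by
  obtain ⟨l, hlen, hl, rfl⟩ := exists_word_length_eq_len hw
  have hlα : ∀ σ ∈ l ++ [α], σ ∈ Δ := by simpa [or_imp, forall_and] using ⟨hl, hα⟩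
  simpa [coe_word_concat, hlen] using len_word_le hlα

/-- The exchange condition. -/
lemma exists_word_eq_word_comp_sref (hRS : IsRS Φ Δ) {l : List V} (hl : ∀ σ ∈ l, σ ∈ Δ)
    {α : V} (hα : α ∈ Δ) (h : word l α ∉ Pos Φ Δ) :
    ∃ l' : List V, (∀ σ ∈ l', σ ∈ Δ) ∧ l'.length + 1 = l.length ∧ word l ∘ sref α = word l' := by
  induction l with
  | nil => exact absurd (simple_mem_Pos hRS hα) h
  | cons σ t ih =>
    have hσ : σ ∈ Δ := hl σ List.mem_cons_self
    have ht : ∀ x ∈ t, x ∈ Δ := fun x hx => hl x (List.mem_cons_of_mem _ hx)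
    rw [coe_word_cons, Function.comp_apply] at h
    by_cases htα : word t α ∈ Pos Φ Δ
    · have hσ_eq : word t α = σ := by
        by_contra hne
        exact h (sref_simple_mem_Pos hRS hσ htα hne)
      refine ⟨t, ht, rfl, ?_⟩
      ext x
      simp [coe_word_cons, ← hσ_eq, sref_map, sref_sref]
    · obtain ⟨t', ht', hlen, heq⟩ := ih ht htα
      refine ⟨σ :: t', ?_, by simp [← hlen], ?_⟩
      · simpa [hσ] using ht'
      · rw [coe_word_cons, coe_word_cons, ← heq]
        rfl

def inversionSet (Φ Δ : Finset V) (w : V → V) : Finset V :=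
  (Pos Φ Δ).filter fun γ => w γ ∉ Pos Φ Δ

lemma mem_inversionSet {w : V → V} {γ : V} :
    γ ∈ inversionSet Φ Δ w ↔ γ ∈ Pos Φ Δ ∧ w γ ∉ Pos Φ Δ := Finset.mem_filter

lemma card_inversionSet_comp_sref_erase (hRS : IsRS Φ Δ) (w : V → V) {α : V} (hα : α ∈ Δ) :
    ((inversionSet Φ Δ (w ∘ sref α)).erase α).card = ((inversionSet Φ Δ w).erase α).card := by
  have maps_to : ∀ (u : V → V) γ, γ ∈ (inversionSet Φ Δ (u ∘ sref α)).erase α →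
      sref α γ ∈ (inversionSet Φ Δ u).erase α := by
    intro u γ hγ
    obtain ⟨hne, hγP, hu⟩ := Finset.mem_erase.mp hγ |>.imp_right mem_inversionSet.mp
    exact Finset.mem_erase.mpr
      ⟨sref_simple_ne hRS hα hγP, mem_inversionSet.mpr ⟨sref_simple_mem_Pos hRS hα hγP hne, hu⟩⟩
  refine Finset.card_bij' (fun γ _ => sref α γ) (fun δ _ => sref α δ) (maps_to w)
    (fun δ hδ => maps_to (w ∘ sref α) δ ?_) (fun γ _ => sref_sref α γ) (fun δ _ => sref_sref α δ)
  simpa [Function.comp_def, sref_sref] using hδ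

lemma card_inversionSet_comp_sref (hRS : IsRS Φ Δ) (u : V ≃ₗᵢ[ℝ] V) {α : V} (hα : α ∈ Δ)
    (h : u α ∈ Pos Φ Δ) :
    (inversionSet Φ Δ (u ∘ sref α)).card = (inversionSet Φ Δ u).card + 1 := by
  have hα_not_mem : α ∉ inversionSet Φ Δ u := fun hmem => (mem_inversionSet.mp hmem).2 h
  have hα_mem : α ∈ inversionSet Φ Δ (u ∘ sref α) := by
    refine mem_inversionSet.mpr ⟨simple_mem_Pos hRS hα, ?_⟩
    rw [Function.comp_apply, sref_self, map_neg]
    exact neg_notMem_Pos hRS h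
  rw [← Finset.card_erase_add_one hα_mem, card_inversionSet_comp_sref_erase hRS u hα,
    Finset.erase_eq_of_notMem hα_not_mem]

lemma card_inversionSet_word (hRS : IsRS Φ Δ) {l : List V} (hl : ∀ σ ∈ l, σ ∈ Δ)
    (hred : len Δ (word l) = l.length) : (inversionSet Φ Δ (word l)).card = l.length := by
  induction l using List.reverseRecOn with
  | nil =>
    refine Finset.card_eq_zero.mpr (Finset.filter_false_of_mem fun γ hγ => ?_)
    simpa [word] using hγ
  | append_singleton l α ih =>
    have hl' : ∀ σ ∈ l, σ ∈ Δ := fun σ hσ => hl σ (List.mem_append_left _ hσ)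
    have hα : α ∈ Δ := hl α (List.mem_append_right _ (List.mem_singleton_self α))
    rw [List.length_append, List.length_singleton] at hred ⊢
    have hlen : len Δ (word l) = l.length := by
      have := len_comp_sref_le ⟨_, isWord_word hl'⟩ hα
      rw [← coe_word_concat, hred] at this
      linarith [len_word_le hl']
    by_cases hpos : word l α ∈ Pos Φ Δ
    · rw [coe_word_concat, card_inversionSet_comp_sref hRS _ hα hpos, ih hl' hlen]
    · obtain ⟨l', hl'Δ, hlen', heq⟩ := exists_word_eq_word_comp_sref hRS hl' hα hpos
      have := len_word_le hl'Δ
      rw [← heq, ← coe_word_concat, hred] at this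
      omega

lemma card_inversionSet_eq_len (hRS : IsRS Φ Δ) {w : V → V} (hw : w ∈ Weyl Δ) :
    (inversionSet Φ Δ w).card = len Δ w := by
  obtain ⟨l, hlen, hl, rfl⟩ := exists_word_length_eq_len hw
  rw [card_inversionSet_word hRS hl hlen.symm, hlen]

/-- The height `∑ cₐ` of a positive root `∑ cₐ α`, with junk value `0` off `Pos Φ Δ`. -/
def height (Φ Δ : Finset V) (β : V) : ℝ :=
  if h : β ∈ Pos Φ Δ then ∑ α ∈ Δ, (Finset.mem_filter.mp h).2.choose α else 0

lemma height_eq (hRS : IsRS Φ Δ) {β : V} (hβ : β ∈ Pos Φ Δ) {c : V → ℝ}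
    (hc : β = ∑ α ∈ Δ, c α • α) : height Φ Δ β = ∑ α ∈ Δ, c α := by
  rw [height, dif_pos hβ]
  have hspec := (Finset.mem_filter.mp hβ).2.choose_spec
  exact Finset.sum_congr rfl fun α hα => coeff_eq_of_sum_eq hRS (hspec.2.symm.trans hc) hα

lemma height_sref_simple (hRS : IsRS Φ Δ) {α β : V} (hα : α ∈ Δ) (hβ : β ∈ Pos Φ Δ)
    (hαβ : sref α β ∈ Pos Φ Δ) : height Φ Δ (sref α β) = height Φ Δ β - cpr β α := by
  obtain ⟨-, c, -, hc⟩ := Finset.mem_filter.mp hβ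
  have hsc : sref α β = ∑ x ∈ Δ, (c x - (Pi.single α (cpr β α) : V → ℝ) x) • x := by
    simp only [sub_smul, Finset.sum_sub_distrib, sum_single_smul hα, ← hc, sref]
  rw [height_eq hRS hαβ hsc, height_eq hRS hβ hc, Finset.sum_sub_distrib,
    Finset.sum_pi_single', if_pos hα]

lemma exists_simple_inner_pos (hRS : IsRS Φ Δ) {β : V} (hβ : β ∈ Pos Φ Δ) :
    ∃ α ∈ Δ, 0 < ⟪β, α⟫ := by
  obtain ⟨hβΦ, c, hc, hce⟩ := Finset.mem_filter.mp hβ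
  by_contra! hle
  have hβ_self : ⟪β, ∑ α ∈ Δ, c α • α⟫ = ∑ α ∈ Δ, c α * ⟪β, α⟫ := by
    simp only [inner_sum, real_inner_smul_right]
  rw [← hce] at hβ_self
  have : ⟪β, β⟫ ≤ 0 := hβ_self ▸ Finset.sum_nonpos fun α hα =>
    mul_nonpos_of_nonneg_of_nonpos (hc α hα) (hle α hα)
  exact ne_zero_of_mem hRS hβΦ (real_inner_self_nonpos.mp this)

/-- A counterexample of minimal height could be lowered by a simple reflection. -/
lemma exists_word_apply_simple (hRS : IsRS Φ Δ) {β : V} (hβ : β ∈ Pos Φ Δ) :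
    ∃ l : List V, (∀ σ ∈ l, σ ∈ Δ) ∧ ∃ α ∈ Δ, word l α = β := by
  by_contra hβ_bad
  set bad := (Pos Φ Δ).filter fun γ => ¬∃ l : List V, (∀ σ ∈ l, σ ∈ Δ) ∧ ∃ α ∈ Δ, word l α = γ
  obtain ⟨γ, hγ_bad, hγ_min⟩ :=
    bad.exists_min_image (height Φ Δ) ⟨β, Finset.mem_filter.mpr ⟨hβ, hβ_bad⟩⟩
  obtain ⟨hγ, hγ_not⟩ := Finset.mem_filter.mp hγ_bad
  obtain ⟨α, hα, hγα⟩ := exists_simple_inner_pos hRS hγ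
  have hne : γ ≠ α := by
    rintro rfl
    exact hγ_not ⟨[], by simp, γ, hα, rfl⟩
  have hαγ := sref_simple_mem_Pos hRS hα hγ hne
  have hcpr : 0 < cpr γ α := by
    have := real_inner_self_pos.mpr (ne_zero_of_mem hRS (hRS.simple_mem α hα))
    rw [cpr]; positivity
  have hlower : ¬ sref α γ ∈ bad := fun h => by
    linarith [hγ_min _ h, height_sref_simple hRS hα hγ hαγ]
  obtain ⟨l, hl, α', hα', hl_eq⟩ := not_not.mp fun h => hlower (Finset.mem_filter.mpr ⟨hαγ, h⟩)
  refine hγ_not ⟨α :: l, by simpa [hα] using hl, α', hα', ?_⟩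
  rw [coe_word_cons, Function.comp_apply, hl_eq, sref_sref]

lemma sref_mem_Weyl (hRS : IsRS Φ Δ) {β : V} (hβ : β ∈ Pos Φ Δ) : sref β ∈ Weyl Δ := by
  obtain ⟨l, hl, α, hα, rfl⟩ := exists_word_apply_simple hRS hβ
  have hlΔ : ∀ σ ∈ l ++ α :: l.reverse, σ ∈ Δ := by
    simp only [List.mem_append, List.mem_cons, List.mem_reverse]
    rintro σ (hσ | rfl | hσ) <;> first | exact hα | exact hl σ hσ
  suffices sref (word l α) = word (l ++ α :: l.reverse) from this ▸ ⟨_, isWord_word hlΔ⟩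
  rw [sref_map, ← LinearIsometryEquiv.coe_inv, word_inv, ← List.singleton_append,
    ← List.append_assoc, word_append, LinearIsometryEquiv.coe_mul, coe_word_concat]
  rfl

lemma cpr_lt_two {β γ : V} (hβ : β ≠ 0) (hnorm : ‖γ‖ = ‖β‖) (hne : γ ≠ β) : cpr γ β < 2 := by
  have hββ : 0 < ⟪β, β⟫ := real_inner_self_pos.mpr hβ
  have hββ_eq : ⟪β, β⟫ = ‖γ‖ * ‖β‖ := by rw [hnorm, real_inner_self_eq_norm_mul_norm]
  have hCS_ne : ⟪γ, β⟫ ≠ ‖γ‖ * ‖β‖ := fun h => hne <| by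
    rw [inner_eq_norm_mul_iff_real, hnorm] at h
    exact smul_right_injective V (norm_ne_zero_iff.mpr hβ) h
  rw [cpr, div_lt_iff₀ hββ, hββ_eq]
  linarith [lt_of_le_of_ne (real_inner_le_norm γ β) hCS_ne]

lemma sum_cpr_eq_zero_of_mapsTo (s : Finset V) (β : V) (hs : ∀ γ ∈ s, sref β γ ∈ s) :
    ∑ γ ∈ s, cpr γ β = 0 := by
  refine Finset.sum_involution (fun γ _ => sref β γ) (fun γ _ => by rw [cpr_sref_self]; ring)
    (fun γ _ hγ hfix => hγ ?_) hs (fun γ _ => sref_sref β γ)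
  have : cpr γ β • β = 0 := by rw [sref, sub_eq_self] at hfix; exact hfix
  rcases smul_eq_zero.mp this with h | rfl
  · exact h
  · simp [cpr]

lemma cpr_eq_one_of_mem_inversionSet_sref (hRS : IsRS Φ Δ) (hSL : SimplyLaced Φ) {β γ : V}
    (hβ : β ∈ Pos Φ Δ) (hγ : γ ∈ inversionSet Φ Δ (sref β)) (hne : γ ≠ β) : cpr γ β = 1 := by
  obtain ⟨hγP, hγβ⟩ := mem_inversionSet.mp hγ
  have hβΦ := mem_of_mem_Pos hβ
  have hγΦ := mem_of_mem_Pos hγP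
  obtain ⟨k, hk⟩ := hRS.cryst γ hγΦ β hβΦ
  have hpos : (0 : ℝ) < k := by
    by_contra! hk0
    exact hγβ (sref_mem_Pos_of_cpr_nonpos hRS hβ hγP (hk ▸ hk0))
  have hnorm : ‖γ‖ = ‖β‖ := by
    have := hSL γ hγΦ β hβΦ
    rwa [real_inner_self_eq_norm_sq, real_inner_self_eq_norm_sq, sq_eq_sq₀ (norm_nonneg _)
      (norm_nonneg _)] at this
  have hlt : (k : ℝ) < 2 := hk ▸ cpr_lt_two (ne_zero_of_mem hRS hβΦ) hnorm hne
  have hk1 : k = 1 := by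
    have h0 : (0 : ℤ) < k := by exact_mod_cast hpos
    have h2 : k < (2 : ℤ) := by exact_mod_cast hlt
    omega
  rw [← hk, hk1, Int.cast_one]

lemma sum_cpr_inversionSet_sref (hRS : IsRS Φ Δ) (hSL : SimplyLaced Φ) {β : V}
    (hβ : β ∈ Pos Φ Δ) :
    ∑ γ ∈ inversionSet Φ Δ (sref β), cpr γ β = (inversionSet Φ Δ (sref β)).card + 1 := by
  have hβ0 := ne_zero_of_mem hRS (mem_of_mem_Pos hβ)
  have hβ_mem : β ∈ inversionSet Φ Δ (sref β) :=
    mem_inversionSet.mpr ⟨hβ, by rw [sref_self]; exact neg_notMem_Pos hRS hβ⟩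
  rw [← Finset.add_sum_erase _ _ hβ_mem, cpr_self hβ0,
    Finset.sum_congr rfl fun γ hγ => cpr_eq_one_of_mem_inversionSet_sref hRS hSL hβ
      (Finset.mem_of_mem_erase hγ) (Finset.ne_of_mem_erase hγ),
    Finset.sum_const, nsmul_one, Finset.card_erase_of_mem hβ_mem,
    Nat.cast_sub (Finset.card_pos.mpr ⟨β, hβ_mem⟩)]
  push_cast
  ring

end Pp

open Pp in
/-- In a simply-laced root system every positive root `β` is a quantum root:
`ℓ(s_β) = ⟨2ρ, β^∨⟩ - 1`. -/
theorem stmt1 {V : Type*} [NormedAddCommGroup V] [InnerProductSpace ℝ V]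
    (Φ Δ : Finset V) (hRS : IsRS Φ Δ) (hSL : SimplyLaced Φ)
    (β : V) (hβ : β ∈ Pos Φ Δ) :
    IsQuantum Φ Δ β := by
  have h2rho : (2 : ℝ) • rho Φ Δ = ∑ γ ∈ Pos Φ Δ, γ := by
    rw [rho, smul_inv_smul₀ two_ne_zero]
  have hfixed : ∀ γ ∈ (Pos Φ Δ).filter (sref β · ∈ Pos Φ Δ),
      sref β γ ∈ (Pos Φ Δ).filter (sref β · ∈ Pos Φ Δ) := by
    intro γ hγ
    rw [Finset.mem_filter] at hγ ⊢
    exact ⟨hγ.2, by rw [sref_sref]; exact hγ.1⟩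
  rw [IsQuantum, h2rho, cpr_sum, ← Finset.sum_filter_add_sum_filter_not _ (sref β · ∈ Pos Φ Δ),
    sum_cpr_eq_zero_of_mapsTo _ β hfixed, ← inversionSet, sum_cpr_inversionSet_sref hRS hSL hβ,
    card_inversionSet_eq_len hRS (sref_mem_Weyl hRS hβ)]
  ring
end
end

section
/- Let ι ∈ I be a minuscule node with fundamental weight ϖ_ι and let γ be the distinguished root (γ = α_ι in the simply-laced case; γ = α_{n-1} + 2α_n in type B_n with ι = n; γ = θ the highest root in type C_n with ι = 1). Then ⟨ϖ_ι, γ^∨⟩ = 1, and ⟨α, γ^∨⟩ = −1 for every α ∈ R_P^+ \ R_Q^+, where I_P = I \ {ι} and I_Q = { j ∈ I_P : ⟨α_j, γ^∨⟩ = 0 }. -/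
/- A combinatorial framework for reduced crystallographic root systems with a
chosen system of simple roots, realized inside a real inner product space.
Weyl group elements are represented as plain functions `V → V` that are
compositions of simple reflections; `len` is the Coxeter length. -/

noncomputable section
open Classical
open scoped RealInnerProductSpace

/-! In each of the three cases `γ` is a root of maximal length with `⟨ϖ, γ^∨⟩ = 1` such that
every simple root of `P` pairs non-positively with `γ` (in types B and C this is a computation in
coordinates). For a positive root `α` of `R_P` outside `R_Q` the pairing `⟨α, γ^∨⟩` is then a
negative integer. If it were `≤ -2`, then, `α` being no longer than `γ`, we would get
`‖α + γ‖ = 0`; but `α = -γ` is impossible because `ϖ` is orthogonal to `R_P` and not to `γ`. -/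

namespace Pp

variable {V : Type*} [NormedAddCommGroup V] [InnerProductSpace ℝ V]

section Pairing

lemma cpr_sum_s4 (c : V → ℝ) (S : Finset V) (γ : V) :
    cpr (∑ j ∈ S, c j • j) γ = ∑ j ∈ S, c j * cpr j γ := by
  simp only [cpr, sum_inner, real_inner_smul_left, Finset.mul_sum, Finset.sum_div]
  exact Finset.sum_congr rfl fun j _ => by ring

lemma cpr_neg_left (x α : V) : cpr (-x) α = -cpr x α := by
  simp only [cpr, inner_neg_left]
  ring

lemma cpr_eq_zero_iff {x α : V} : cpr x α = 0 ↔ ⟪x, α⟫ = 0 := by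
  rcases eq_or_ne α 0 with rfl | hα
  · simp [cpr]
  · simp [cpr, hα]

lemma cpr_nonpos_of_inner_nonpos {x α : V} (h : ⟪x, α⟫ ≤ 0) : cpr x α ≤ 0 :=
  div_nonpos_of_nonpos_of_nonneg (by linarith) real_inner_self_nonneg

/-- `‖α + γ‖² = ‖α‖² + 2⟪α, γ⟫ + ‖γ‖² ≤ ‖γ‖² - 2‖γ‖² + ‖γ‖² = 0`. -/
lemma eq_neg_of_cpr_le_neg_two {α γ : V} (hγ : γ ≠ 0) (hlen : ⟪α, α⟫ ≤ ⟪γ, γ⟫)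
    (h : cpr α γ ≤ -2) : α = -γ := by
  have hγγ : 0 < ⟪γ, γ⟫ := real_inner_self_pos.mpr hγ
  have hαγ : ⟪α, γ⟫ ≤ -⟪γ, γ⟫ := by
    rw [cpr, div_le_iff₀ hγγ] at h
    linarith
  have hsum : ⟪α + γ, α + γ⟫ ≤ 0 := by
    rw [inner_add_left, inner_add_right, inner_add_right, real_inner_comm α γ]
    linarith
  exact eq_neg_of_add_eq_zero_left (real_inner_self_nonpos.mp hsum)

end Pairing

section Positive

variable {Φ S : Finset V}

lemma inner_eq_zero_of_mem_pos {x α : V} (hα : α ∈ Pos Φ S) (hx : ∀ j ∈ S, ⟪x, j⟫ = 0) :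
    ⟪x, α⟫ = 0 := by
  obtain ⟨-, c, -, rfl⟩ := Finset.mem_filter.mp hα
  simp only [inner_sum, real_inner_smul_right]
  exact Finset.sum_eq_zero fun j hj => by rw [hx j hj, mul_zero]

lemma cpr_nonpos_of_mem_pos {α γ : V} (hα : α ∈ Pos Φ S) (hS : ∀ j ∈ S, cpr j γ ≤ 0) :
    cpr α γ ≤ 0 := by
  obtain ⟨-, c, hc, rfl⟩ := Finset.mem_filter.mp hα
  rw [cpr_sum_s4]
  exact Finset.sum_nonpos fun j hj => mul_nonpos_of_nonneg_of_nonpos (hc j hj) (hS j hj)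

/-- The terms `c j * cpr j γ` of `cpr α γ = 0` are all `≤ 0`, hence all vanish. -/
lemma mem_pos_filter_of_cpr_eq_zero {α γ : V} (hα : α ∈ Pos Φ S)
    (hS : ∀ j ∈ S, cpr j γ ≤ 0) (h0 : cpr α γ = 0) :
    α ∈ Pos Φ (S.filter fun j => cpr j γ = 0) := by
  obtain ⟨hαΦ, c, hc, rfl⟩ := Finset.mem_filter.mp hα
  have hterm : ∀ j ∈ S, c j * cpr j γ = 0 := by
    refine (Finset.sum_eq_zero_iff_of_nonpos fun j hj => ?_).mp (by rwa [← cpr_sum_s4])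
    exact mul_nonpos_of_nonneg_of_nonpos (hc j hj) (hS j hj)
  refine Finset.mem_filter.mpr ⟨hαΦ, c, fun j hj => hc j (Finset.mem_filter.mp hj).1, ?_⟩
  rw [Finset.sum_filter, eq_comm]
  refine Finset.sum_congr rfl fun j hj => ?_
  split_ifs with hj0
  · rfl
  · rw [(mul_eq_zero.mp (hterm j hj)).resolve_right hj0, zero_smul]

lemma cpr_lt_zero_of_notMem_pos_filter {α γ : V} (hα : α ∈ Pos Φ S)
    (hS : ∀ j ∈ S, cpr j γ ≤ 0) (hαQ : α ∉ Pos Φ (S.filter fun j => cpr j γ = 0)) :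
    cpr α γ < 0 :=
  (cpr_nonpos_of_mem_pos hα hS).lt_of_ne fun h0 => hαQ (mem_pos_filter_of_cpr_eq_zero hα hS h0)

theorem cpr_eq_neg_one_of_notMem_pos_filter {α γ ϖ : V}
    (hint : ∃ k : ℤ, (k : ℝ) = cpr α γ) (hlen : ⟪α, α⟫ ≤ ⟪γ, γ⟫)
    (hS : ∀ j ∈ S, cpr j γ ≤ 0) (hϖS : ∀ j ∈ S, cpr ϖ j = 0) (hϖγ : cpr ϖ γ ≠ 0)
    (hα : α ∈ Pos Φ S) (hαQ : α ∉ Pos Φ (S.filter fun j => cpr j γ = 0)) :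
    cpr α γ = -1 := by
  obtain ⟨k, hk⟩ := hint
  have hϖα : ⟪ϖ, α⟫ = 0 :=
    inner_eq_zero_of_mem_pos hα fun j hj => cpr_eq_zero_iff.mp (hϖS j hj)
  have hne : α ≠ -γ := by
    rintro rfl
    exact hϖγ (cpr_eq_zero_iff.mpr (by simpa [inner_neg_right] using hϖα))
  have hγ : γ ≠ 0 := by
    rintro rfl
    exact hϖγ (cpr_eq_zero_iff.mpr (inner_zero_right ϖ))
  have hk_neg : k < 0 := by exact_mod_cast hk ▸ cpr_lt_zero_of_notMem_pos_filter hα hS hαQ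
  have hk_gt : -2 < k := by
    by_contra! h2
    have h2' : (k : ℝ) ≤ -2 := by exact_mod_cast h2
    exact hne (eq_neg_of_cpr_le_neg_two hγ hlen (hk ▸ h2'))
  rw [← hk, show k = -1 by omega]
  norm_num

end Positive

section SimpleRoots

variable {Φ Δ : Finset V}

lemma sub_notMem_pos (hind : LinearIndependent ℝ fun α : Δ => (α : V)) {α β : V}
    (hα : α ∈ Δ) (hβ : β ∈ Δ) (hne : α ≠ β) : α - β ∉ Pos Φ Δ := by
  intro hpos
  obtain ⟨-, c, hc, hsum⟩ := Finset.mem_filter.mp hpos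
  set f : V → ℝ := fun j => c j + (if j = β then 1 else 0) - (if j = α then 1 else 0)
  have hf : ∑ j ∈ Δ, f j • j = 0 := by
    simp only [f, sub_smul, add_smul, ite_smul, one_smul, zero_smul, Finset.sum_sub_distrib,
      Finset.sum_add_distrib, Finset.sum_ite_eq', hα, hβ, if_true, ← hsum]
    abel
  have := (linearIndepOn_finset_iff (v := id)).mp hind f hf β hβ
  simp only [f, if_neg hne.symm, if_true] at this
  linarith [hc β hβ]

lemma cpr_nonpos_of_mem_simple (hRS : IsRS Φ Δ) {α β : V} (hα : α ∈ Δ) (hβ : β ∈ Δ)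
    (hne : α ≠ β) (hlen : ⟪α, α⟫ ≤ ⟪β, β⟫) : cpr α β ≤ 0 := by
  have hαΦ := hRS.simple_mem α hα
  have hβΦ := hRS.simple_mem β hβ
  obtain ⟨k, hk⟩ := hRS.cryst α hαΦ β hβΦ
  by_contra! hpos
  have hk1 : k = 1 := by
    have hβ0 : β ≠ 0 := fun h => hRS.zero_not_mem (h ▸ hβΦ)
    have hk_pos : 0 < k := by exact_mod_cast hk ▸ hpos
    have hk_lt : k < 2 := by
      by_contra! h2
      have h2' : (2 : ℝ) ≤ k := by exact_mod_cast h2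
      refine hne (neg_inj.mp (eq_neg_of_cpr_le_neg_two hβ0 (by simpa using hlen) ?_))
      rw [cpr_neg_left, ← hk]
      linarith
    omega
  have hsub : α - β ∈ Φ := by
    have := hRS.refl_mem β hβΦ α hαΦ
    rwa [sref, ← hk, hk1, Int.cast_one, one_smul] at this
  rcases hRS.pos_or_neg _ hsub with h | h
  · exact sub_notMem_pos hRS.simple_indep hα hβ hne h
  · exact sub_notMem_pos hRS.simple_indep hβ hα hne.symm (by rwa [neg_sub] at h)

end SimpleRoots

section Coordinates

variable {Φ Δ : Finset V} {n : ℕ} {e : Fin n → V}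

lemma inner_self_eq_two_of_orthonormal (he : Orthonormal ℝ e) {v : V}
    (hv : ∃ i j : Fin n, i ≠ j ∧ (v = e i - e j ∨ v = e i + e j ∨ v = -(e i + e j))) :
    ⟪v, v⟫ = 2 := by
  have hee := orthonormal_iff_ite.mp he
  obtain ⟨i, j, hij, rfl | rfl | rfl⟩ := hv <;>
  simp only [inner_add_left, inner_add_right, inner_sub_left, inner_sub_right, inner_neg_left,
    inner_neg_right, hee, if_neg hij, if_neg hij.symm] <;> norm_num

namespace TypeBData

variable (hB : TypeBData Φ Δ n e)
include hB

lemma add_mem {i j : Fin n} (hij : i ≠ j) : e i + e j ∈ Φ :=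
  Finset.mem_coe.mp (hB.2.1 ▸ Or.inl ⟨i, j, hij, Or.inr (Or.inl rfl)⟩)

lemma sub_succ_mem_simple (i : Fin n) (h : (i : ℕ) + 1 < n) : e i - e ⟨i + 1, h⟩ ∈ Δ :=
  Finset.mem_coe.mp (hB.2.2 ▸ Or.inl ⟨i, h, rfl⟩)

lemma inner_self_le_add {i j : Fin n} (hij : i ≠ j) :
    ∀ β ∈ Φ, ⟪β, β⟫ ≤ ⟪e i + e j, e i + e j⟫ := by
  intro β hβ
  have hβ' : β ∈ (Φ : Set V) := hβ
  rw [hB.2.1] at hβ'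
  rw [inner_self_eq_two_of_orthonormal hB.1 ⟨i, j, hij, Or.inr (Or.inl rfl)⟩]
  rcases hβ' with hpair | ⟨k, rfl | rfl⟩
  · exact (inner_self_eq_two_of_orthonormal hB.1 hpair).le
  all_goals simp [hB.1.1 k]

variable {ϖ : V} (hn : 2 ≤ n)
include hn

lemma last_mem_simple : e ⟨n - 1, by omega⟩ ∈ Δ :=
  Finset.mem_coe.mp (hB.2.2 ▸ Or.inr ⟨by omega, rfl⟩)

lemma cpr_simple_nonpos :
    ∀ x ∈ Δ.erase (e ⟨n - 1, by omega⟩), cpr x (e ⟨n - 2, by omega⟩ + e ⟨n - 1, by omega⟩) ≤ 0 := by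
  have hee := orthonormal_iff_ite.mp hB.1
  intro x hx
  have hx' : x ∈ (Δ : Set V) := Finset.mem_of_mem_erase hx
  rw [hB.2.2] at hx'
  rcases hx' with ⟨i, hi, rfl⟩ | ⟨_, hxι⟩
  · apply cpr_nonpos_of_inner_nonpos
    simp only [inner_sub_left, inner_add_right, hee, Fin.ext_iff]
    split_ifs <;> first | omega | norm_num
  · exact absurd hxι (Finset.ne_of_mem_erase hx)

lemma cpr_weight (hϖ : ∀ α ∈ Δ, cpr ϖ α = if α = e ⟨n - 1, by omega⟩ then 1 else 0) :
    cpr ϖ (e ⟨n - 2, by omega⟩ + e ⟨n - 1, by omega⟩) = 1 := by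
  have hee := orthonormal_iff_ite.mp hB.1
  have hlast : e ⟨n - 2 + 1, by omega⟩ = e ⟨n - 1, by omega⟩ :=
    congrArg e (Fin.ext (by simp; omega))
  have hα : e ⟨n - 2, by omega⟩ - e ⟨n - 1, by omega⟩ ∈ Δ :=
    hlast ▸ hB.sub_succ_mem_simple ⟨n - 2, by omega⟩ (by simp; omega)
  have hαι : e ⟨n - 2, by omega⟩ - e ⟨n - 1, by omega⟩ ≠ e ⟨n - 1, by omega⟩ := by
    intro h
    have := congrArg (fun v => ⟪v, e ⟨n - 2, by omega⟩⟫) h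
    simp only [inner_sub_left, hee, Fin.ext_iff] at this
    split_ifs at this <;> first | omega | norm_num at this
  have h1 := hϖ _ (hB.last_mem_simple hn)
  have h0 := cpr_eq_zero_iff.mp ((hϖ _ hα).trans (if_neg hαι))
  rw [if_pos rfl, cpr, hee, if_pos rfl] at h1
  rw [inner_sub_right] at h0
  have hγγ : ⟪e ⟨n - 2, by omega⟩ + e ⟨n - 1, by omega⟩, e ⟨n - 2, by omega⟩ + e ⟨n - 1, by omega⟩⟫
      = 2 :=
    inner_self_eq_two_of_orthonormal hB.1 ⟨_, _, by simp; omega, Or.inr (Or.inl rfl)⟩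
  rw [cpr, inner_add_right, hγγ]
  linarith

end TypeBData

namespace TypeCData

variable (hC : TypeCData Φ Δ n e)
include hC

lemma two_smul_mem (i : Fin n) : (2 : ℝ) • e i ∈ Φ :=
  Finset.mem_coe.mp (hC.2.1 ▸ Or.inr ⟨i, Or.inl rfl⟩)

lemma sub_succ_mem_simple (i : Fin n) (h : (i : ℕ) + 1 < n) : e i - e ⟨i + 1, h⟩ ∈ Δ :=
  Finset.mem_coe.mp (hC.2.2 ▸ Or.inl ⟨i, h, rfl⟩)

lemma inner_self_le_two_smul (i : Fin n) : ∀ β ∈ Φ, ⟪β, β⟫ ≤ ⟪(2 : ℝ) • e i, (2 : ℝ) • e i⟫ := by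
  have hee := orthonormal_iff_ite.mp hC.1
  have h4 : ∀ j, ⟪(2 : ℝ) • e j, (2 : ℝ) • e j⟫ = 4 := fun j => by
    simp only [real_inner_smul_left, real_inner_smul_right, hee]
    norm_num
  intro β hβ
  have hβ' : β ∈ (Φ : Set V) := hβ
  rw [hC.2.1] at hβ'
  rw [h4]
  rcases hβ' with hpair | ⟨j, rfl | rfl⟩
  · linarith [inner_self_eq_two_of_orthonormal hC.1 hpair]
  · exact (h4 j).le
  · rw [inner_neg_left, inner_neg_right, neg_neg, h4]

variable {ϖ : V} (hn : 2 ≤ n)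
include hn

lemma last_mem_simple : (2 : ℝ) • e ⟨n - 1, by omega⟩ ∈ Δ :=
  Finset.mem_coe.mp (hC.2.2 ▸ Or.inr ⟨by omega, rfl⟩)

lemma cpr_simple_nonpos :
    ∀ x ∈ Δ.erase (e ⟨0, by omega⟩ - e ⟨1, by omega⟩), cpr x ((2 : ℝ) • e ⟨0, by omega⟩) ≤ 0 := by
  have hee := orthonormal_iff_ite.mp hC.1
  intro x hx
  have hx' : x ∈ (Δ : Set V) := Finset.mem_of_mem_erase hx
  rw [hC.2.2] at hx'
  apply cpr_nonpos_of_inner_nonpos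
  rcases hx' with ⟨i, hi, rfl⟩ | ⟨_, rfl⟩
  · have hi0 : (i : ℕ) ≠ 0 := fun h0 =>
      Finset.ne_of_mem_erase hx (by congr 2 <;> exact Fin.ext (by simp [h0]))
    simp only [inner_sub_left, real_inner_smul_right, hee, Fin.ext_iff]
    split_ifs <;> first | omega | norm_num
  · simp only [real_inner_smul_left, real_inner_smul_right, hee, Fin.ext_iff]
    split_ifs <;> first | omega | norm_num

/-- `ϖ` is orthogonal to `e₁, …, e_{n-1}`, by descending induction from the long simple root
`2eₙ₋₁` along the chain `eᵢ - eᵢ₊₁`. -/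
lemma cpr_weight (hϖ : ∀ α ∈ Δ, cpr ϖ α = if α = e ⟨0, by omega⟩ - e ⟨1, by omega⟩ then 1 else 0) :
    cpr ϖ ((2 : ℝ) • e ⟨0, by omega⟩) = 1 := by
  have hee := orthonormal_iff_ite.mp hC.1
  have hvanish : ∀ x ∈ Δ, ⟪x, e ⟨0, by omega⟩⟫ = 0 → ⟪ϖ, x⟫ = 0 := by
    intro x hx hx0
    refine cpr_eq_zero_iff.mp ((hϖ x hx).trans (if_neg fun h => ?_))
    rw [h, inner_sub_left, hee, hee, if_pos rfl, if_neg (by simp)] at hx0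
    norm_num at hx0
  have htail : ∀ m (hm : m + 1 < n), ⟪ϖ, e ⟨n - 1 - m, by omega⟩⟫ = 0 := by
    intro m
    induction m with
    | zero =>
      intro hm
      have h := hvanish _ (hC.last_mem_simple hn) (by
        rw [real_inner_smul_left, hee, if_neg (by simp; omega), mul_zero])
      rw [real_inner_smul_right] at h
      simpa using h
    | succ m ih =>
      intro hm
      have hsucc : e ⟨n - 1 - (m + 1) + 1, by omega⟩ = e ⟨n - 1 - m, by omega⟩ :=
        congrArg e (Fin.ext (by simp; omega))
      have hx := hsucc ▸ hC.sub_succ_mem_simple ⟨n - 1 - (m + 1), by omega⟩ (by simp; omega)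
      have h := hvanish _ hx (by
        rw [inner_sub_left, hee, hee, if_neg (by simp; omega), if_neg (by simp; omega), sub_zero])
      rwa [inner_sub_right, ih (by omega), sub_zero] at h
  have he1 : ⟪ϖ, e ⟨1, by omega⟩⟫ = 0 := by
    simpa [show n - 1 - (n - 2) = 1 by omega] using htail (n - 2) (by omega)
  have hι := hϖ _ (hC.sub_succ_mem_simple ⟨0, by omega⟩ (by simp; omega))
  rw [if_pos rfl, cpr, inner_sub_right, he1, inner_sub_left, inner_sub_right, inner_sub_right,
    hee, hee, hee, hee] at hι
  rw [cpr, real_inner_smul_right, real_inner_smul_left, real_inner_smul_right, hee, if_pos rfl]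
  norm_num at hι ⊢
  linarith

end TypeCData

end Coordinates

end Pp

open Pp in
theorem stmt4_general {V : Type*} [NormedAddCommGroup V] [InnerProductSpace ℝ V]
    (Φ Δ : Finset V) (hRS : IsRS Φ Δ) (ι : V) (hι : ι ∈ Δ)
    (γ : V) (hγ : DistinguishedGamma Φ Δ ι γ)
    (ϖ : V) (hϖ : ∀ α ∈ Δ, cpr ϖ α = if α = ι then 1 else 0) :
    cpr ϖ γ = 1 ∧
    ∀ α ∈ Pos Φ (Δ.erase ι),
      α ∉ Pos Φ ((Δ.erase ι).filter fun j => cpr j γ = 0) →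
      cpr α γ = -1 := by
  obtain ⟨hγΦ, hlong, hS, hϖγ⟩ : γ ∈ Φ ∧ (∀ β ∈ Φ, ⟪β, β⟫ ≤ ⟪γ, γ⟫) ∧
      (∀ j ∈ Δ.erase ι, cpr j γ ≤ 0) ∧ cpr ϖ γ = 1 := by
    rcases hγ with ⟨hSL, rfl⟩ | ⟨n, hn, e, hB, rfl, rfl⟩ | ⟨n, hn, e, hC, rfl, rfl⟩
    · have hγΦ := hRS.simple_mem γ hι
      refine ⟨hγΦ, fun β hβ => (hSL β hβ γ hγΦ).le, fun j hj => ?_, by simp [hϖ γ hι]⟩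
      have hjΔ := Finset.mem_of_mem_erase hj
      exact cpr_nonpos_of_mem_simple hRS hjΔ hι (Finset.ne_of_mem_erase hj)
        (hSL j (hRS.simple_mem j hjΔ) γ hγΦ).le
    · exact ⟨hB.add_mem (by simp; omega), hB.inner_self_le_add (by simp; omega),
        hB.cpr_simple_nonpos hn, hB.cpr_weight hn hϖ⟩
    · exact ⟨hC.two_smul_mem _, hC.inner_self_le_two_smul _, hC.cpr_simple_nonpos hn,
        hC.cpr_weight hn hϖ⟩
  refine ⟨hϖγ, fun α hα hαQ => ?_⟩
  have hαΦ := (Finset.mem_filter.mp hα).1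
  have hϖS : ∀ j ∈ Δ.erase ι, cpr ϖ j = 0 := fun j hj =>
    (hϖ j (Finset.mem_of_mem_erase hj)).trans (if_neg (Finset.ne_of_mem_erase hj))
  exact cpr_eq_neg_one_of_notMem_pos_filter (hRS.cryst α hαΦ γ hγΦ) (hlong α hαΦ) hS hϖS
    (by rw [hϖγ]; exact one_ne_zero) hα hαQ

open Pp in
/-- Lemma 2.1: for the distinguished root `γ` of a minuscule node `ι`:
`⟨ϖ_ι, γ^∨⟩ = 1`, and `⟨α, γ^∨⟩ = -1` for all `α ∈ R_P^+ \ R_Q^+`, where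
`I_P = I \ {ι}` and `I_Q = {j ∈ I_P : ⟨α_j, γ^∨⟩ = 0}`. -/
theorem stmt4 {V : Type*} [NormedAddCommGroup V] [InnerProductSpace ℝ V]
    (Φ Δ : Finset V) (hRS : IsRS Φ Δ) (ι : V) (hι : ι ∈ Δ)
    (hmin : Minuscule Φ Δ ι)
    (γ : V) (hγ : DistinguishedGamma Φ Δ ι γ)
    (ϖ : V) (hϖ : ∀ α ∈ Δ, cpr ϖ α = if α = ι then 1 else 0) :
    cpr ϖ γ = 1 ∧
    ∀ α ∈ Pos Φ (Δ.erase ι),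
      α ∉ Pos Φ ((Δ.erase ι).filter fun j => cpr j γ = 0) →
      cpr α γ = -1 :=
  stmt4_general Φ Δ hRS ι hι γ hγ ϖ hϖ
end
end
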